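/- Let 0<α<1 with α≠1/2, and set m = α/(1−2α) (so that 2mα+α−m = 0). Define Y₁ = X₁, Y₂ = X₂, Y₃ = X₄, Y₄ = X₄ − X₃. Then for every twice continuously differentiable function f on Ω: [Y₁,Y₃]f = Y₁f, [Y₂,Y₃]f = ((1−α)/α)·Y₂f, [Y₁,Y₂]f = 0, and [Y₄,Y₁]f = [Y₄,Y₂]f = [Y₄,Y₃]f = 0; in particular Y₄ is central. -/

import Mathlib

abbrev E4 : Type := ℝ × ℝ × ℝ × ℝ

def ee1 : E4 := (1, 0, 0, 0)
def ee2 : E4 := (0, 1, 0, 0)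
def ee3 : E4 := (0, 0, 1, 0)
def ee4 : E4 := (0, 0, 0, 1)

lemma hasDerivAt_ln1 (t u v x : ℝ) : HasDerivAt (fun s : ℝ => ((s, t, u, v) : E4)) ee1 x :=
  HasDerivAt.prodMk (hasDerivAt_id x) (HasDerivAt.prodMk (hasDerivAt_const x t)
    (HasDerivAt.prodMk (hasDerivAt_const x u) (hasDerivAt_const x v)))

lemma hasDerivAt_ln2 (x u v t : ℝ) : HasDerivAt (fun s : ℝ => ((x, s, u, v) : E4)) ee2 t :=
  HasDerivAt.prodMk (hasDerivAt_const t x) (HasDerivAt.prodMk (hasDerivAt_id t)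
    (HasDerivAt.prodMk (hasDerivAt_const t u) (hasDerivAt_const t v)))

lemma hasDerivAt_ln3 (x t v u : ℝ) : HasDerivAt (fun s : ℝ => ((x, t, s, v) : E4)) ee3 u :=
  HasDerivAt.prodMk (hasDerivAt_const u x) (HasDerivAt.prodMk (hasDerivAt_const u t)
    (HasDerivAt.prodMk (hasDerivAt_id u) (hasDerivAt_const u v)))

lemma hasDerivAt_ln4 (x t u v : ℝ) : HasDerivAt (fun s : ℝ => ((x, t, u, s) : E4)) ee4 v :=
  HasDerivAt.prodMk (hasDerivAt_const v x) (HasDerivAt.prodMk (hasDerivAt_const v t)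
    (HasDerivAt.prodMk (hasDerivAt_const v u) (hasDerivAt_id v)))

lemma fd_comp {F : E4 → ℝ} {q : E4} (hF : DifferentiableAt ℝ F q) {L : ℝ → E4} {a : E4} {r : ℝ}
    (hL : HasDerivAt L a r) (hq : L r = q) :
    HasDerivAt (fun s => F (L s)) (fderiv ℝ F q a) r := by
  have h := hF.hasFDerivAt
  rw [← hq] at h
  have h2 := h.comp_hasDerivAt r hL
  rw [hq] at h2
  exact h2

lemma fd2_comp {F : E4 → ℝ} {q : E4} (hF : ContDiffAt ℝ 2 F q) {L : ℝ → E4} {a : E4} {r : ℝ}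
    (hL : HasDerivAt L a r) (hq : L r = q) (e : E4) :
    HasDerivAt (fun s => fderiv ℝ F (L s) e) (fderiv ℝ (fderiv ℝ F) q a e) r := by
  have h1 : ContDiffAt ℝ 1 (fderiv ℝ F) q := hF.fderiv_right (by norm_num)
  have h2 := (h1.differentiableAt one_ne_zero).hasFDerivAt
  rw [← hq] at h2
  have h3 := h2.comp_hasDerivAt r hL
  have h4 := h3.clm_apply (hasDerivAt_const r e)
  rw [hq] at h4
  simpa using h4

noncomputable def Pf (f : ℝ → ℝ → ℝ → ℝ → ℝ) : E4 → ℝ := fun p => f p.1 p.2.1 p.2.2.1 p.2.2.2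


/-- `X₁ f = ∂f/∂x`, where `f = f(x, t, u, v)`. -/
noncomputable def X1 (f : ℝ → ℝ → ℝ → ℝ → ℝ) : ℝ → ℝ → ℝ → ℝ → ℝ :=
  fun x t u v => deriv (fun x' => f x' t u v) x

/-- `X₂ f = t^(α-1) ∂f/∂v`. -/
noncomputable def X2 (α : ℝ) (f : ℝ → ℝ → ℝ → ℝ → ℝ) : ℝ → ℝ → ℝ → ℝ → ℝ :=
  fun x t u v => t ^ (α - 1) * deriv (fun v' => f x t u v') v

/-- `X₃ f = x ∂f/∂x + (t/α) ∂f/∂t`. -/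
noncomputable def X3 (α : ℝ) (f : ℝ → ℝ → ℝ → ℝ → ℝ) : ℝ → ℝ → ℝ → ℝ → ℝ :=
  fun x t u v => x * deriv (fun x' => f x' t u v) x + (t / α) * deriv (fun t' => f x t' u v) t

/-- `X₄ f = x ∂f/∂x + (u/m) ∂f/∂u + ((m+1)/m) v ∂f/∂v`. -/
noncomputable def X4 (m : ℝ) (f : ℝ → ℝ → ℝ → ℝ → ℝ) : ℝ → ℝ → ℝ → ℝ → ℝ :=
  fun x t u v => x * deriv (fun x' => f x' t u v) x + (u / m) * deriv (fun u' => f x t u' v) u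
    + ((m + 1) / m) * v * deriv (fun v' => f x t u v') v

/-- `Y₄ = X₄ - X₃` (case 2.2). -/
noncomputable def Y4op (α m : ℝ) (f : ℝ → ℝ → ℝ → ℝ → ℝ) : ℝ → ℝ → ℝ → ℝ → ℝ :=
  fun x t u v => X4 m f x t u v - X3 α f x t u v

/-- Case 2.2 (`m = α/(1-2α)`, `α ≠ 1/2`): with `Y₁ = X₁`, `Y₂ = X₂`, `Y₃ = X₄`,
`Y₄ = X₄ - X₃`, for every `C²` function `f` on `Ω = {t > 0}` we have
`[Y₁,Y₃]f = Y₁f`, `[Y₂,Y₃]f = ((1-α)/α)·Y₂f`, `[Y₁,Y₂]f = 0`, and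
`[Y₄,Y₁]f = [Y₄,Y₂]f = [Y₄,Y₃]f = 0`; in particular `Y₄` is central. -/
theorem commutators_case22 (α m : ℝ) (hα0 : 0 < α) (hα1 : α < 1) (hα2 : α ≠ 1 / 2)
    (hm : m = α / (1 - 2 * α))
    (f : ℝ → ℝ → ℝ → ℝ → ℝ)
    (hf : ContDiffOn ℝ 2 (fun p : ℝ × ℝ × ℝ × ℝ => f p.1 p.2.1 p.2.2.1 p.2.2.2)
      {p : ℝ × ℝ × ℝ × ℝ | 0 < p.2.1}) :
    ∀ x t u v : ℝ, 0 < t →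
      (X1 (X4 m f) x t u v - X4 m (X1 f) x t u v = X1 f x t u v) ∧
      (X2 α (X4 m f) x t u v - X4 m (X2 α f) x t u v = ((1 - α) / α) * X2 α f x t u v) ∧
      (X1 (X2 α f) x t u v - X2 α (X1 f) x t u v = 0) ∧
      (Y4op α m (X1 f) x t u v - X1 (Y4op α m f) x t u v = 0) ∧
      (Y4op α m (X2 α f) x t u v - X2 α (Y4op α m f) x t u v = 0) ∧
      (Y4op α m (X4 m f) x t u v - X4 m (Y4op α m f) x t u v = 0) := by
  intro x t u v ht
  have hopen : IsOpen {q : E4 | 0 < q.2.1} :=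
    isOpen_lt continuous_const (continuous_fst.comp continuous_snd)
  have hcd : ∀ x' t' u' v' : ℝ, 0 < t' → ContDiffAt ℝ 2 (Pf f) (x', t', u', v') :=
    fun x' t' u' v' ht' => hf.contDiffAt (hopen.mem_nhds ht')
  have hdf : ∀ x' t' u' v' : ℝ, 0 < t' → DifferentiableAt ℝ (Pf f) (x', t', u', v') :=
    fun x' t' u' v' ht' => (hcd x' t' u' v' ht').differentiableAt (by norm_num)
  have pd1 : ∀ x' t' u' v' : ℝ, 0 < t' →
      deriv (fun y => f y t' u' v') x' = fderiv ℝ (Pf f) (x', t', u', v') ee1 :=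
    fun x' t' u' v' ht' =>
      (fd_comp (hdf x' t' u' v' ht') (hasDerivAt_ln1 t' u' v' x') rfl).deriv
  have pd2 : ∀ x' t' u' v' : ℝ, 0 < t' →
      deriv (fun y => f x' y u' v') t' = fderiv ℝ (Pf f) (x', t', u', v') ee2 :=
    fun x' t' u' v' ht' =>
      (fd_comp (hdf x' t' u' v' ht') (hasDerivAt_ln2 x' u' v' t') rfl).deriv
  have pd3 : ∀ x' t' u' v' : ℝ, 0 < t' →
      deriv (fun y => f x' t' y v') u' = fderiv ℝ (Pf f) (x', t', u', v') ee3 :=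
    fun x' t' u' v' ht' =>
      (fd_comp (hdf x' t' u' v' ht') (hasDerivAt_ln3 x' t' v' u') rfl).deriv
  have pd4 : ∀ x' t' u' v' : ℝ, 0 < t' →
      deriv (fun y => f x' t' u' y) v' = fderiv ℝ (Pf f) (x', t', u', v') ee4 :=
    fun x' t' u' v' ht' =>
      (fd_comp (hdf x' t' u' v' ht') (hasDerivAt_ln4 x' t' u' v') rfl).deriv
  have hp : ContDiffAt ℝ 2 (Pf f) (x, t, u, v) := hcd x t u v ht
  have hsym : ∀ a b : E4, fderiv ℝ (fderiv ℝ (Pf f)) (x, t, u, v) a b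
      = fderiv ℝ (fderiv ℝ (Pf f)) (x, t, u, v) b a := hp.isSymmSndFDerivAt (by simp)
  have kx : ∀ e : E4, HasDerivAt (fun s => fderiv ℝ (Pf f) (s, t, u, v) e)
      (fderiv ℝ (fderiv ℝ (Pf f)) (x, t, u, v) ee1 e) x :=
    fun e => fd2_comp hp (hasDerivAt_ln1 t u v x) rfl e
  have kt : ∀ e : E4, HasDerivAt (fun s => fderiv ℝ (Pf f) (x, s, u, v) e)
      (fderiv ℝ (fderiv ℝ (Pf f)) (x, t, u, v) ee2 e) t :=
    fun e => fd2_comp hp (hasDerivAt_ln2 x u v t) rfl e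
  have ku : ∀ e : E4, HasDerivAt (fun s => fderiv ℝ (Pf f) (x, t, s, v) e)
      (fderiv ℝ (fderiv ℝ (Pf f)) (x, t, u, v) ee3 e) u :=
    fun e => fd2_comp hp (hasDerivAt_ln3 x t v u) rfl e
  have kv : ∀ e : E4, HasDerivAt (fun s => fderiv ℝ (Pf f) (x, t, u, s) e)
      (fderiv ℝ (fderiv ℝ (Pf f)) (x, t, u, v) ee4 e) v :=
    fun e => fd2_comp hp (hasDerivAt_ln4 x t u v) rfl e
  -- abbreviations used below (written out in full in statements)
  -- derivative computations for X1 f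
  have hX1x : deriv (fun x' => X1 f x' t u v) x
      = fderiv ℝ (fderiv ℝ (Pf f)) (x, t, u, v) ee1 ee1 := by
    have hev : (fun x' => X1 f x' t u v) =ᶠ[nhds x]
        (fun x' => fderiv ℝ (Pf f) (x', t, u, v) ee1) :=
      Filter.Eventually.of_forall fun x' => pd1 x' t u v ht
    exact ((kx ee1).congr_of_eventuallyEq hev).deriv
  have hX1t : deriv (fun t' => X1 f x t' u v) t
      = fderiv ℝ (fderiv ℝ (Pf f)) (x, t, u, v) ee2 ee1 := by
    have hev : (fun t' => X1 f x t' u v) =ᶠ[nhds t]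
        (fun t' => fderiv ℝ (Pf f) (x, t', u, v) ee1) := by
      filter_upwards [eventually_gt_nhds ht] with t' ht'
      exact pd1 x t' u v ht'
    exact ((kt ee1).congr_of_eventuallyEq hev).deriv
  have hX1u : deriv (fun u' => X1 f x t u' v) u
      = fderiv ℝ (fderiv ℝ (Pf f)) (x, t, u, v) ee3 ee1 := by
    have hev : (fun u' => X1 f x t u' v) =ᶠ[nhds u]
        (fun u' => fderiv ℝ (Pf f) (x, t, u', v) ee1) :=
      Filter.Eventually.of_forall fun u' => pd1 x t u' v ht
    exact ((ku ee1).congr_of_eventuallyEq hev).deriv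
  have hX1v : deriv (fun v' => X1 f x t u v') v
      = fderiv ℝ (fderiv ℝ (Pf f)) (x, t, u, v) ee4 ee1 := by
    have hev : (fun v' => X1 f x t u v') =ᶠ[nhds v]
        (fun v' => fderiv ℝ (Pf f) (x, t, u, v') ee1) :=
      Filter.Eventually.of_forall fun v' => pd1 x t u v' ht
    exact ((kv ee1).congr_of_eventuallyEq hev).deriv
  -- derivative computations for X2 f
  have hX2x : deriv (fun x' => X2 α f x' t u v) x
      = t ^ (α - 1) * fderiv ℝ (fderiv ℝ (Pf f)) (x, t, u, v) ee1 ee4 := by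
    have hev : (fun x' => X2 α f x' t u v) =ᶠ[nhds x]
        (fun x' => t ^ (α - 1) * fderiv ℝ (Pf f) (x', t, u, v) ee4) :=
      Filter.Eventually.of_forall fun x' => by
        show t ^ (α - 1) * deriv (fun y => f x' t u y) v = _
        rw [pd4 x' t u v ht]
    exact ((((kx ee4).const_mul (t ^ (α - 1))).congr_of_eventuallyEq hev).deriv).trans (by simp only [id_eq]; try ring)
  have hX2u : deriv (fun u' => X2 α f x t u' v) u
      = t ^ (α - 1) * fderiv ℝ (fderiv ℝ (Pf f)) (x, t, u, v) ee3 ee4 := by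
    have hev : (fun u' => X2 α f x t u' v) =ᶠ[nhds u]
        (fun u' => t ^ (α - 1) * fderiv ℝ (Pf f) (x, t, u', v) ee4) :=
      Filter.Eventually.of_forall fun u' => by
        show t ^ (α - 1) * deriv (fun y => f x t u' y) v = _
        rw [pd4 x t u' v ht]
    exact ((((ku ee4).const_mul (t ^ (α - 1))).congr_of_eventuallyEq hev).deriv).trans (by simp only [id_eq]; try ring)
  have hX2v : deriv (fun v' => X2 α f x t u v') v
      = t ^ (α - 1) * fderiv ℝ (fderiv ℝ (Pf f)) (x, t, u, v) ee4 ee4 := by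
    have hev : (fun v' => X2 α f x t u v') =ᶠ[nhds v]
        (fun v' => t ^ (α - 1) * fderiv ℝ (Pf f) (x, t, u, v') ee4) :=
      Filter.Eventually.of_forall fun v' => by
        show t ^ (α - 1) * deriv (fun y => f x t u y) v' = _
        rw [pd4 x t u v' ht]
    exact ((((kv ee4).const_mul (t ^ (α - 1))).congr_of_eventuallyEq hev).deriv).trans (by simp only [id_eq]; try ring)
  have hX2t : deriv (fun t' => X2 α f x t' u v) t
      = (α - 1) * t ^ (α - 1 - 1) * fderiv ℝ (Pf f) (x, t, u, v) ee4
        + t ^ (α - 1) * fderiv ℝ (fderiv ℝ (Pf f)) (x, t, u, v) ee2 ee4 := by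
    have hev : (fun t' => X2 α f x t' u v) =ᶠ[nhds t]
        (fun t' => t' ^ (α - 1) * fderiv ℝ (Pf f) (x, t', u, v) ee4) := by
      filter_upwards [eventually_gt_nhds ht] with t' ht'
      show t' ^ (α - 1) * deriv (fun y => f x t' u y) v = _
      rw [pd4 x t' u v ht']
    have hpow : HasDerivAt (fun t' : ℝ => t' ^ (α - 1)) ((α - 1) * t ^ (α - 1 - 1)) t :=
      Real.hasDerivAt_rpow_const (Or.inl ht.ne')
    exact (((hpow.mul (kt ee4)).congr_of_eventuallyEq hev).deriv).trans (by simp only [id_eq]; try ring)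
  -- derivative computations for X4 f
  have hX4x : deriv (fun x' => X4 m f x' t u v) x
      = fderiv ℝ (Pf f) (x, t, u, v) ee1
        + x * fderiv ℝ (fderiv ℝ (Pf f)) (x, t, u, v) ee1 ee1
        + u / m * fderiv ℝ (fderiv ℝ (Pf f)) (x, t, u, v) ee1 ee3
        + (m + 1) / m * v * fderiv ℝ (fderiv ℝ (Pf f)) (x, t, u, v) ee1 ee4 := by
    have hev : (fun x' => X4 m f x' t u v) =ᶠ[nhds x]
        (fun x' => x' * fderiv ℝ (Pf f) (x', t, u, v) ee1
          + u / m * fderiv ℝ (Pf f) (x', t, u, v) ee3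
          + (m + 1) / m * v * fderiv ℝ (Pf f) (x', t, u, v) ee4) :=
      Filter.Eventually.of_forall fun x' => by
        show x' * deriv (fun y => f y t u v) x' + u / m * deriv (fun y => f x' t y v) u
            + (m + 1) / m * v * deriv (fun y => f x' t u y) v = _
        rw [pd1 x' t u v ht, pd3 x' t u v ht, pd4 x' t u v ht]
    have hd := (((hasDerivAt_id x).mul (kx ee1)).add ((kx ee3).const_mul (u / m))).add
      ((kx ee4).const_mul ((m + 1) / m * v))
    exact ((hd.congr_of_eventuallyEq hev).deriv).trans (by simp only [id_eq]; try ring)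
  have hX4t : deriv (fun t' => X4 m f x t' u v) t
      = x * fderiv ℝ (fderiv ℝ (Pf f)) (x, t, u, v) ee2 ee1
        + u / m * fderiv ℝ (fderiv ℝ (Pf f)) (x, t, u, v) ee2 ee3
        + (m + 1) / m * v * fderiv ℝ (fderiv ℝ (Pf f)) (x, t, u, v) ee2 ee4 := by
    have hev : (fun t' => X4 m f x t' u v) =ᶠ[nhds t]
        (fun t' => x * fderiv ℝ (Pf f) (x, t', u, v) ee1
          + u / m * fderiv ℝ (Pf f) (x, t', u, v) ee3
          + (m + 1) / m * v * fderiv ℝ (Pf f) (x, t', u, v) ee4) := by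
      filter_upwards [eventually_gt_nhds ht] with t' ht'
      show x * deriv (fun y => f y t' u v) x + u / m * deriv (fun y => f x t' y v) u
          + (m + 1) / m * v * deriv (fun y => f x t' u y) v = _
      rw [pd1 x t' u v ht', pd3 x t' u v ht', pd4 x t' u v ht']
    have hd := (((kt ee1).const_mul x).add ((kt ee3).const_mul (u / m))).add
      ((kt ee4).const_mul ((m + 1) / m * v))
    exact ((hd.congr_of_eventuallyEq hev).deriv).trans (by simp only [id_eq]; try ring)
  have hX4u : deriv (fun u' => X4 m f x t u' v) u
      = x * fderiv ℝ (fderiv ℝ (Pf f)) (x, t, u, v) ee3 ee1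
        + 1 / m * fderiv ℝ (Pf f) (x, t, u, v) ee3
        + u / m * fderiv ℝ (fderiv ℝ (Pf f)) (x, t, u, v) ee3 ee3
        + (m + 1) / m * v * fderiv ℝ (fderiv ℝ (Pf f)) (x, t, u, v) ee3 ee4 := by
    have hev : (fun u' => X4 m f x t u' v) =ᶠ[nhds u]
        (fun u' => x * fderiv ℝ (Pf f) (x, t, u', v) ee1
          + u' / m * fderiv ℝ (Pf f) (x, t, u', v) ee3
          + (m + 1) / m * v * fderiv ℝ (Pf f) (x, t, u', v) ee4) :=
      Filter.Eventually.of_forall fun u' => by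
        show x * deriv (fun y => f y t u' v) x + u' / m * deriv (fun y => f x t y v) u'
            + (m + 1) / m * v * deriv (fun y => f x t u' y) v = _
        rw [pd1 x t u' v ht, pd3 x t u' v ht, pd4 x t u' v ht]
    have hd := (((ku ee1).const_mul x).add
      (((hasDerivAt_id u).div_const m).mul (ku ee3))).add
      ((ku ee4).const_mul ((m + 1) / m * v))
    exact ((hd.congr_of_eventuallyEq hev).deriv).trans (by simp only [id_eq]; try ring)
  have hX4v : deriv (fun v' => X4 m f x t u v') v
      = x * fderiv ℝ (fderiv ℝ (Pf f)) (x, t, u, v) ee4 ee1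
        + u / m * fderiv ℝ (fderiv ℝ (Pf f)) (x, t, u, v) ee4 ee3
        + (m + 1) / m * fderiv ℝ (Pf f) (x, t, u, v) ee4
        + (m + 1) / m * v * fderiv ℝ (fderiv ℝ (Pf f)) (x, t, u, v) ee4 ee4 := by
    have hev : (fun v' => X4 m f x t u v') =ᶠ[nhds v]
        (fun v' => x * fderiv ℝ (Pf f) (x, t, u, v') ee1
          + u / m * fderiv ℝ (Pf f) (x, t, u, v') ee3
          + (m + 1) / m * v' * fderiv ℝ (Pf f) (x, t, u, v') ee4) :=
      Filter.Eventually.of_forall fun v' => by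
        show x * deriv (fun y => f y t u v') x + u / m * deriv (fun y => f x t y v') u
            + (m + 1) / m * v' * deriv (fun y => f x t u y) v' = _
        rw [pd1 x t u v' ht, pd3 x t u v' ht, pd4 x t u v' ht]
    have hd := (((kv ee1).const_mul x).add ((kv ee3).const_mul (u / m))).add
      ((((hasDerivAt_id v).const_mul ((m + 1) / m))).mul (kv ee4))
    exact ((hd.congr_of_eventuallyEq hev).deriv).trans (by simp only [id_eq]; try ring)
  -- derivative computations for Y4 f
  have hY4x : deriv (fun x' => Y4op α m f x' t u v) x
      = u / m * fderiv ℝ (fderiv ℝ (Pf f)) (x, t, u, v) ee1 ee3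
        + (m + 1) / m * v * fderiv ℝ (fderiv ℝ (Pf f)) (x, t, u, v) ee1 ee4
        - t / α * fderiv ℝ (fderiv ℝ (Pf f)) (x, t, u, v) ee1 ee2 := by
    have hev : (fun x' => Y4op α m f x' t u v) =ᶠ[nhds x]
        (fun x' => (x' * fderiv ℝ (Pf f) (x', t, u, v) ee1
          + u / m * fderiv ℝ (Pf f) (x', t, u, v) ee3
          + (m + 1) / m * v * fderiv ℝ (Pf f) (x', t, u, v) ee4)
          - (x' * fderiv ℝ (Pf f) (x', t, u, v) ee1
            + t / α * fderiv ℝ (Pf f) (x', t, u, v) ee2)) :=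
      Filter.Eventually.of_forall fun x' => by
        show (x' * deriv (fun y => f y t u v) x' + u / m * deriv (fun y => f x' t y v) u
            + (m + 1) / m * v * deriv (fun y => f x' t u y) v)
            - (x' * deriv (fun y => f y t u v) x' + t / α * deriv (fun y => f x' y u v) t) = _
        rw [pd1 x' t u v ht, pd2 x' t u v ht, pd3 x' t u v ht, pd4 x' t u v ht]
    have hd := ((((hasDerivAt_id x).mul (kx ee1)).add ((kx ee3).const_mul (u / m))).add
      ((kx ee4).const_mul ((m + 1) / m * v))).sub
      (((hasDerivAt_id x).mul (kx ee1)).add ((kx ee2).const_mul (t / α)))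
    exact ((hd.congr_of_eventuallyEq hev).deriv).trans (by simp only [id_eq]; try ring)
  have hY4u : deriv (fun u' => Y4op α m f x t u' v) u
      = 1 / m * fderiv ℝ (Pf f) (x, t, u, v) ee3
        + u / m * fderiv ℝ (fderiv ℝ (Pf f)) (x, t, u, v) ee3 ee3
        + (m + 1) / m * v * fderiv ℝ (fderiv ℝ (Pf f)) (x, t, u, v) ee3 ee4
        - t / α * fderiv ℝ (fderiv ℝ (Pf f)) (x, t, u, v) ee3 ee2 := by
    have hev : (fun u' => Y4op α m f x t u' v) =ᶠ[nhds u]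
        (fun u' => (x * fderiv ℝ (Pf f) (x, t, u', v) ee1
          + u' / m * fderiv ℝ (Pf f) (x, t, u', v) ee3
          + (m + 1) / m * v * fderiv ℝ (Pf f) (x, t, u', v) ee4)
          - (x * fderiv ℝ (Pf f) (x, t, u', v) ee1
            + t / α * fderiv ℝ (Pf f) (x, t, u', v) ee2)) :=
      Filter.Eventually.of_forall fun u' => by
        show (x * deriv (fun y => f y t u' v) x + u' / m * deriv (fun y => f x t y v) u'
            + (m + 1) / m * v * deriv (fun y => f x t u' y) v)
            - (x * deriv (fun y => f y t u' v) x + t / α * deriv (fun y => f x y u' v) t) = _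
        rw [pd1 x t u' v ht, pd2 x t u' v ht, pd3 x t u' v ht, pd4 x t u' v ht]
    have hd := ((((ku ee1).const_mul x).add
      (((hasDerivAt_id u).div_const m).mul (ku ee3))).add
      ((ku ee4).const_mul ((m + 1) / m * v))).sub
      (((ku ee1).const_mul x).add ((ku ee2).const_mul (t / α)))
    exact ((hd.congr_of_eventuallyEq hev).deriv).trans (by simp only [id_eq]; try ring)
  have hY4v : deriv (fun v' => Y4op α m f x t u v') v
      = u / m * fderiv ℝ (fderiv ℝ (Pf f)) (x, t, u, v) ee4 ee3
        + (m + 1) / m * fderiv ℝ (Pf f) (x, t, u, v) ee4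
        + (m + 1) / m * v * fderiv ℝ (fderiv ℝ (Pf f)) (x, t, u, v) ee4 ee4
        - t / α * fderiv ℝ (fderiv ℝ (Pf f)) (x, t, u, v) ee4 ee2 := by
    have hev : (fun v' => Y4op α m f x t u v') =ᶠ[nhds v]
        (fun v' => (x * fderiv ℝ (Pf f) (x, t, u, v') ee1
          + u / m * fderiv ℝ (Pf f) (x, t, u, v') ee3
          + (m + 1) / m * v' * fderiv ℝ (Pf f) (x, t, u, v') ee4)
          - (x * fderiv ℝ (Pf f) (x, t, u, v') ee1
            + t / α * fderiv ℝ (Pf f) (x, t, u, v') ee2)) :=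
      Filter.Eventually.of_forall fun v' => by
        show (x * deriv (fun y => f y t u v') x + u / m * deriv (fun y => f x t y v') u
            + (m + 1) / m * v' * deriv (fun y => f x t u y) v')
            - (x * deriv (fun y => f y t u v') x + t / α * deriv (fun y => f x y u v') t) = _
        rw [pd1 x t u v' ht, pd2 x t u v' ht, pd3 x t u v' ht, pd4 x t u v' ht]
    have hd := ((((kv ee1).const_mul x).add ((kv ee3).const_mul (u / m))).add
      ((((hasDerivAt_id v).const_mul ((m + 1) / m))).mul (kv ee4))).sub
      (((kv ee1).const_mul x).add ((kv ee2).const_mul (t / α)))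
    exact ((hd.congr_of_eventuallyEq hev).deriv).trans (by simp only [id_eq]; try ring)
  -- symmetry instances
  have s21 := hsym ee2 ee1
  have s31 := hsym ee3 ee1
  have s41 := hsym ee4 ee1
  have s32 := hsym ee3 ee2
  have s42 := hsym ee4 ee2
  have s43 := hsym ee4 ee3
  -- algebraic facts
  have hαne : α ≠ 0 := hα0.ne'
  have h2α : 1 - 2 * α ≠ 0 := by
    intro h; apply hα2; linarith
  have hm0 : m ≠ 0 := by rw [hm]; exact div_ne_zero hαne h2α
  have hc : (m + 1) / m = (1 - α) / α := by
    rw [hm, div_add_one h2α, div_div_div_cancel_right₀ h2α]; ring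
  have hT : t * t ^ (α - 1 - 1) = t ^ (α - 1) := by
    rw [Real.rpow_sub ht, Real.rpow_one]
    field_simp
  refine ⟨?_, ?_, ?_, ?_, ?_, ?_⟩
  · show deriv (fun x' => X4 m f x' t u v) x
      - (x * deriv (fun x' => X1 f x' t u v) x + u / m * deriv (fun u' => X1 f x t u' v) u
        + (m + 1) / m * v * deriv (fun v' => X1 f x t u v') v)
      = deriv (fun x' => f x' t u v) x
    rw [hX4x, hX1x, hX1u, hX1v, pd1 x t u v ht]
    simp only [s31, s41]
    ring
  · show t ^ (α - 1) * deriv (fun v' => X4 m f x t u v') v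
      - (x * deriv (fun x' => X2 α f x' t u v) x + u / m * deriv (fun u' => X2 α f x t u' v) u
        + (m + 1) / m * v * deriv (fun v' => X2 α f x t u v') v)
      = (1 - α) / α * (t ^ (α - 1) * deriv (fun v' => f x t u v') v)
    rw [hX4v, hX2x, hX2u, hX2v, pd4 x t u v ht]
    simp only [s41, s43]
    rw [hc]
    ring
  · show deriv (fun x' => X2 α f x' t u v) x
      - t ^ (α - 1) * deriv (fun v' => X1 f x t u v') v = 0
    rw [hX2x, hX1v]
    simp only [s41]
    ring
  · show (x * deriv (fun x' => X1 f x' t u v) x + u / m * deriv (fun u' => X1 f x t u' v) u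
        + (m + 1) / m * v * deriv (fun v' => X1 f x t u v') v
      - (x * deriv (fun x' => X1 f x' t u v) x + t / α * deriv (fun t' => X1 f x t' u v) t))
      - deriv (fun x' => Y4op α m f x' t u v) x = 0
    rw [hX1x, hX1u, hX1v, hX1t, hY4x]
    simp only [s21, s31, s41]
    ring
  · show (x * deriv (fun x' => X2 α f x' t u v) x + u / m * deriv (fun u' => X2 α f x t u' v) u
        + (m + 1) / m * v * deriv (fun v' => X2 α f x t u v') v
      - (x * deriv (fun x' => X2 α f x' t u v) x + t / α * deriv (fun t' => X2 α f x t' u v) t))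
      - t ^ (α - 1) * deriv (fun v' => Y4op α m f x t u v') v = 0
    rw [hX2x, hX2u, hX2v, hX2t, hY4v]
    simp only [s42, s43]
    rw [hc]
    linear_combination ((1 - α) / α * fderiv ℝ (Pf f) (x, t, u, v) ee4) * hT
  · show (x * deriv (fun x' => X4 m f x' t u v) x + u / m * deriv (fun u' => X4 m f x t u' v) u
        + (m + 1) / m * v * deriv (fun v' => X4 m f x t u v') v
      - (x * deriv (fun x' => X4 m f x' t u v) x + t / α * deriv (fun t' => X4 m f x t' u v) t))
      - (x * deriv (fun x' => Y4op α m f x' t u v) x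
        + u / m * deriv (fun u' => Y4op α m f x t u' v) u
        + (m + 1) / m * v * deriv (fun v' => Y4op α m f x t u v') v) = 0
    rw [hX4x, hX4u, hX4v, hX4t, hY4x, hY4u, hY4v]
    simp only [s21, s31, s41, s32, s42, s43]
    ring
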